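/- For fixed c > 0, the function f₂(ω) = 1 / (ω · log₂(1 + c/ω)) on ω > 0 is convex, positive, and strictly decreasing. -/

import Mathlib

/-!
The rate `ω log₂ (1 + c / ω)` is the perspective `ω φ (c / ω)` of the strictly concave function
`φ t = log₂ (1 + t)`. Perspectives of concave functions are concave, and because `φ 0 = 0` the
perspective equals `c` times the slope of the chord of `φ` from `0` to `c / ω`, which increases
with `ω`. Hence the rate is positive, concave and strictly increasing, and its reciprocal `f₂`
is positive, convex and strictly decreasing.
-/

open Set Real

section Reciprocal

variable {𝕜 E : Type*} [Field 𝕜] [LinearOrder 𝕜] [IsStrictOrderedRing 𝕜] [AddCommGroup E]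
  [Module 𝕜 E] {s : Set E} {f : E → 𝕜}

theorem ConcaveOn.convexOn_inv (hf : ConcaveOn 𝕜 s f) (hf₀ : ∀ x ∈ s, 0 < f x) :
    ConvexOn 𝕜 s fun x => (f x)⁻¹ := by
  have hinv : ConvexOn 𝕜 (Ioi 0) fun t : 𝕜 => t⁻¹ := by
    simpa only [zpow_neg_one] using convexOn_zpow (𝕜 := 𝕜) (-1)
  refine ⟨hf.1, fun x hx y hy a b ha hb hab => ?_⟩
  have hcomb : 0 < a • f x + b • f y := convex_Ioi 0 (hf₀ x hx) (hf₀ y hy) ha hb hab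
  calc (f (a • x + b • y))⁻¹ ≤ (a • f x + b • f y)⁻¹ := inv_anti₀ hcomb (hf.2 hx hy ha hb hab)
    _ ≤ a • (f x)⁻¹ + b • (f y)⁻¹ := hinv.2 (hf₀ x hx) (hf₀ y hy) ha hb hab

end Reciprocal

theorem Real.strictConcaveOn_logb_Ioi {b : ℝ} (hb : 1 < b) :
    StrictConcaveOn ℝ (Ioi 0) (logb b) := by
  have hlog : 0 < log b := log_pos hb
  refine ⟨convex_Ioi 0, fun x hx y hy hxy a c ha hc hac => ?_⟩
  have := strictConcaveOn_log_Ioi.2 hx hy hxy ha hc hac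
  simp only [logb, smul_eq_mul] at this ⊢
  calc a * (log x / log b) + c * (log y / log b) = (a * log x + c * log y) / log b := by ring
    _ < log (a * x + c * y) / log b := div_lt_div_of_pos_right this hlog

theorem Real.strictConcaveOn_logb_one_add {b : ℝ} (hb : 1 < b) :
    StrictConcaveOn ℝ (Ici 0) fun t => logb b (1 + t) :=
  ((strictConcaveOn_logb_Ioi hb).translate_right 1).subset
    (fun t (ht : 0 ≤ t) => show 0 < 1 + t by linarith) (convex_Ici 0)

section Perspective

variable {φ : ℝ → ℝ} {c : ℝ}

theorem ConcaveOn.concaveOn_mul_comp_div (hφ : ConcaveOn ℝ (Ioi 0) φ) (hc : 0 < c) :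
    ConcaveOn ℝ (Ioi 0) fun ω => ω * φ (c / ω) := by
  refine ⟨convex_Ioi 0, fun x (hx : 0 < x) y (hy : 0 < y) a b ha hb hab => ?_⟩
  have hω : 0 < a * x + b * y := convex_Ioi (0 : ℝ) hx hy ha hb hab
  simp only [smul_eq_mul]
  generalize hωdef : a * x + b * y = ω at hω ⊢
  have key := hφ.2 (div_pos hc hx) (div_pos hc hy) (div_nonneg (mul_nonneg ha hx.le) hω.le)
    (div_nonneg (mul_nonneg hb hy.le) hω.le) (by rw [← add_div, hωdef, div_self hω.ne'])
  -- `c / ω` is the convex combination of `c / x` and `c / y` with weights `a x / ω`, `b y / ω`.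
  have hpt : a * x / ω * (c / x) + b * y / ω * (c / y) = c / ω := by
    field_simp
    linear_combination hab
  simp only [smul_eq_mul, hpt] at key
  calc a * (x * φ (c / x)) + b * (y * φ (c / y))
      = ω * (a * x / ω * φ (c / x) + b * y / ω * φ (c / y)) := by field_simp
    _ ≤ ω * φ (c / ω) := mul_le_mul_of_nonneg_left key hω.le

theorem StrictConcaveOn.strictMonoOn_mul_comp_div (hφ : StrictConcaveOn ℝ (Ici 0) φ)
    (hφ₀ : φ 0 = 0) (hc : 0 < c) : StrictMonoOn (fun ω => ω * φ (c / ω)) (Ioi 0) := by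
  intro x (hx : 0 < x) y (hy : 0 < y) hxy
  have hslope := hφ.secant_strict_mono (a := 0) (mem_Ici.2 le_rfl) (div_pos hc hy).le
    (div_pos hc hx).le (div_pos hc hy).ne' (div_pos hc hx).ne' (div_lt_div_of_pos_left hc hx hxy)
  simp only [hφ₀, sub_zero, div_div_eq_mul_div] at hslope
  show x * φ (c / x) < y * φ (c / y)
  linarith [(div_lt_div_iff_of_pos_right hc).1 hslope]

end Perspective

/-- The per-unit G2S delay f₂(ω) = 1 / (ω log₂(1 + c/ω)) is convex, positive and
strictly decreasing on ω > 0. -/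
theorem stmt_13 (c : ℝ) (hc : 0 < c) :
    ConvexOn ℝ (Set.Ioi 0) (fun ω : ℝ => 1 / (ω * Real.logb 2 (1 + c / ω))) ∧
    (∀ ω : ℝ, 0 < ω → 0 < 1 / (ω * Real.logb 2 (1 + c / ω))) ∧
    StrictAntiOn (fun ω : ℝ => 1 / (ω * Real.logb 2 (1 + c / ω))) (Set.Ioi 0) := by
  have hlogb := strictConcaveOn_logb_one_add one_lt_two
  have hrate_pos : ∀ ω : ℝ, 0 < ω → 0 < ω * logb 2 (1 + c / ω) := fun ω hω =>
    mul_pos hω (logb_pos one_lt_two (lt_add_of_pos_right 1 (div_pos hc hω)))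
  have hrate_concave : ConcaveOn ℝ (Ioi 0) fun ω => ω * logb 2 (1 + c / ω) :=
    (hlogb.concaveOn.subset Ioi_subset_Ici_self (convex_Ioi 0)).concaveOn_mul_comp_div hc
  have hrate_mono : StrictMonoOn (fun ω => ω * logb 2 (1 + c / ω)) (Ioi 0) :=
    hlogb.strictMonoOn_mul_comp_div (by simp) hc
  simp only [one_div]
  exact ⟨hrate_concave.convexOn_inv hrate_pos,
    fun ω hω => inv_pos.2 (hrate_pos ω hω),
    fun x hx y hy hxy => (inv_lt_inv₀ (hrate_pos y hy) (hrate_pos x hx)).2 (hrate_mono hx hy hxy)⟩
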